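/- Let Φ : M_n(ℂ) → M_n(ℂ) be a linear, positive, trace-preserving map, let ρ° be a state with Φ(ρ°) = ρ°, and let ε ∈ (0,1] be such that Φ(ρ) ≥ ε·ρ° (Loewner order) for every state ρ. Then ρ° is the unique stationary state: any state σ with Φ(σ) = σ satisfies σ = ρ°. -/

import Mathlib

/-!
If `σ` is stationary and `σ ≥ (1 - d) ρ₀`, then `σ - (1 - d) ρ₀` is a fixed point of `Φ` of
trace `d`, so the minorization, extended to all positive semidefinite matrices by homogeneity,
gives `σ ≥ (1 - d (1 - ε)) ρ₀`. Starting from `d = 1` this yields `σ ≥ (1 - (1 - ε)ᵏ) ρ₀` for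
every `k`, hence `σ ≥ ρ₀` in the limit; a positive semidefinite matrix of trace zero vanishes,
so `σ = ρ₀`.
-/

open scoped ComplexOrder

/-- The trace norm of a matrix: `‖A‖₁ = Tr √(Aᴴ A)`.  For a Hermitian matrix this is
the sum of the absolute values of its eigenvalues. -/
noncomputable def traceNorm {n : ℕ} (A : Matrix (Fin n) (Fin n) ℂ) : ℝ :=
  ((((Matrix.posSemidef_conjTranspose_mul_self A).1.eigenvectorUnitary : Matrix (Fin n) (Fin n) ℂ) *
      Matrix.diagonal ((fun x : ℝ => (x : ℂ)) ∘ (Real.sqrt ·) ∘ (Matrix.posSemidef_conjTranspose_mul_self A).1.eigenvalues) *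
      (star (Matrix.posSemidef_conjTranspose_mul_self A).1.eigenvectorUnitary :
        Matrix (Fin n) (Fin n) ℂ)).trace).re

open Filter Topology Matrix

theorem Matrix.isClosed_setOf_posSemidef {𝕜 ι : Type*} [RCLike 𝕜] [Fintype ι] :
    IsClosed {A : Matrix ι ι 𝕜 | A.PosSemidef} := by
  simp only [posSemidef_iff_dotProduct_mulVec, Set.ofPred_and, Set.ofPred_forall]
  refine .inter (isClosed_eq (by fun_prop) continuous_id) (isClosed_iInter fun x => ?_)
  exact isClosed_le continuous_const (by fun_prop)

section Minorization

variable {𝕜 ι : Type*} [RCLike 𝕜] [Fintype ι]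
  {Φ : Matrix ι ι 𝕜 →ₗ[𝕜] Matrix ι ι 𝕜} {ρ₀ : Matrix ι ι 𝕜} {ε : ℝ}
  (hmin : ∀ ρ : Matrix ι ι 𝕜, ρ.PosSemidef → ρ.trace = 1 → (Φ ρ - (ε : 𝕜) • ρ₀).PosSemidef)

include hmin

theorem sub_trace_mul_smul_posSemidef_of_minorization {A : Matrix ι ι 𝕜} (hA : A.PosSemidef) :
    (Φ A - (A.trace * ε) • ρ₀).PosSemidef := by
  rcases hA.trace_nonneg.eq_or_lt with htr | htr
  · simp [hA.trace_eq_zero_iff.mp htr.symm, PosSemidef.zero]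
  have hρ : (A.trace⁻¹ • A).PosSemidef := hA.smul (RCLike.inv_pos_of_pos htr).le
  have hρtr : (A.trace⁻¹ • A).trace = 1 := by
    rw [trace_smul, smul_eq_mul, inv_mul_cancel₀ htr.ne']
  convert (hmin _ hρ hρtr).smul htr.le using 1
  rw [smul_sub, map_smul, smul_smul, mul_inv_cancel₀ htr.ne', one_smul, smul_smul]

variable (hfix : Φ ρ₀ = ρ₀) (hρ₀tr : ρ₀.trace = 1)
  {σ : Matrix ι ι 𝕜} (hσtr : σ.trace = 1) (hσfix : Φ σ = σ)

include hfix hρ₀tr hσtr hσfix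

theorem sub_smul_posSemidef_of_minorization_step {d : ℝ}
    (h : (σ - ((1 - d : ℝ) : 𝕜) • ρ₀).PosSemidef) :
    (σ - ((1 - d * (1 - ε) : ℝ) : 𝕜) • ρ₀).PosSemidef := by
  have hfixA : Φ (σ - ((1 - d : ℝ) : 𝕜) • ρ₀) = σ - ((1 - d : ℝ) : 𝕜) • ρ₀ := by
    rw [map_sub, map_smul, hσfix, hfix]
  have htrA : (σ - ((1 - d : ℝ) : 𝕜) • ρ₀).trace = d := by
    rw [trace_sub, trace_smul, hσtr, hρ₀tr, smul_eq_mul, mul_one]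
    push_cast
    ring
  convert sub_trace_mul_smul_posSemidef_of_minorization hmin h using 1
  rw [hfixA, htrA, sub_sub, ← add_smul]
  push_cast
  ring_nf

theorem sub_smul_posSemidef_of_minorization_pow (hσ : σ.PosSemidef) (k : ℕ) :
    (σ - ((1 - (1 - ε) ^ k : ℝ) : 𝕜) • ρ₀).PosSemidef := by
  induction k with
  | zero => simpa using hσ
  | succ k ih =>
    rw [pow_succ]
    exact sub_smul_posSemidef_of_minorization_step hmin hfix hρ₀tr hσtr hσfix ih

end Minorization

theorem doeblin_unique_stationary_state_general {n : ℕ}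
    (Φ : Matrix (Fin n) (Fin n) ℂ →ₗ[ℂ] Matrix (Fin n) (Fin n) ℂ)
    (ρ₀ : Matrix (Fin n) (Fin n) ℂ) (hρ₀tr : ρ₀.trace = 1)
    (hfix : Φ ρ₀ = ρ₀)
    (ε : ℝ) (hε0 : 0 < ε) (hε1 : ε ≤ 1)
    (hDoeblin : ∀ ρ : Matrix (Fin n) (Fin n) ℂ, ρ.PosSemidef → ρ.trace = 1 →
      (Φ ρ - (ε : ℂ) • ρ₀).PosSemidef)
    (σ : Matrix (Fin n) (Fin n) ℂ) (hσ : σ.PosSemidef) (hσtr : σ.trace = 1)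
    (hσfix : Φ σ = σ) :
    σ = ρ₀ := by
  have hmass : Tendsto (fun k : ℕ => 1 - (1 - ε) ^ k) atTop (𝓝 1) := by
    simpa using tendsto_const_nhds.sub
      (tendsto_pow_atTop_nhds_zero_of_lt_one (sub_nonneg.2 hε1) (sub_lt_self 1 hε0))
  have hlim : Tendsto (fun k : ℕ => σ - ((1 - (1 - ε) ^ k : ℝ) : ℂ) • ρ₀) atTop
      (𝓝 (σ - ρ₀)) := by
    simpa using tendsto_const_nhds.sub
      (((Complex.continuous_ofReal.tendsto 1).comp hmass).smul_const ρ₀)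
  have hle : (σ - ρ₀).PosSemidef :=
    isClosed_setOf_posSemidef.mem_of_tendsto hlim <| .of_forall
      (sub_smul_posSemidef_of_minorization_pow hDoeblin hfix hρ₀tr hσtr hσfix hσ)
  refine sub_eq_zero.mp (hle.trace_eq_zero_iff.mp ?_)
  rw [trace_sub, hσtr, hρ₀tr, sub_self]

/-- Uniqueness of the stationary state of a positive trace-preserving map satisfying
a Doeblin-type minorization `Φ(ρ) ≥ ε·ρ°`. -/
theorem doeblin_unique_stationary_state {n : ℕ}
    (Φ : Matrix (Fin n) (Fin n) ℂ →ₗ[ℂ] Matrix (Fin n) (Fin n) ℂ)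
    (hpos : ∀ A : Matrix (Fin n) (Fin n) ℂ, A.PosSemidef → (Φ A).PosSemidef)
    (htr : ∀ A : Matrix (Fin n) (Fin n) ℂ, (Φ A).trace = A.trace)
    (ρ₀ : Matrix (Fin n) (Fin n) ℂ) (hρ₀ : ρ₀.PosSemidef) (hρ₀tr : ρ₀.trace = 1)
    (hfix : Φ ρ₀ = ρ₀)
    (ε : ℝ) (hε0 : 0 < ε) (hε1 : ε ≤ 1)
    (hDoeblin : ∀ ρ : Matrix (Fin n) (Fin n) ℂ, ρ.PosSemidef → ρ.trace = 1 →
      (Φ ρ - (ε : ℂ) • ρ₀).PosSemidef)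
    (σ : Matrix (Fin n) (Fin n) ℂ) (hσ : σ.PosSemidef) (hσtr : σ.trace = 1)
    (hσfix : Φ σ = σ) :
    σ = ρ₀ :=
  doeblin_unique_stationary_state_general Φ ρ₀ hρ₀tr hfix ε hε0 hε1 hDoeblin σ hσ hσtr hσfix
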